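/- arXiv:2207.12786 — 8 statements merged into one kernel-verified Lean document; each statement's English description precedes it below -/
import Mathlib

section
/- (Theorem: every parameterised consequence is classical, propositional case) Let 𝒫 = (V, T, F) be a parameter: V ⊆ [0,1] is closed (under binary min, max, and x ↦ 1-x) with {0,1} ⊆ V; T ⊆ (1/2, 1] with 1 ∈ T and T upward closed in [0,1]; F ⊆ [0, 1/2) with 0 ∈ F and F downward closed. Define: Γ ⊨_𝒫 Δ iff there is no valuation I taking values only in V on atoms with I(γ) ∈ T for all γ ∈ Γ and I(δ) ∈ F for all δ ∈ Δ. Define classical validity Γ ⊨_C Δ analogously with V = {0,1}, T = {1}, F = {0}. Then for all finite sets Γ, Δ of formulas: Γ ⊨_𝒫 Δ if and only if Γ ⊨_C Δ. -/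
inductive Formula where
  | atom : ℕ → Formula
  | neg : Formula → Formula
  | conj : Formula → Formula → Formula
  | disj : Formula → Formula → Formula

noncomputable def eval (v : ℕ → ℝ) : Formula → ℝ
  | .atom n => v n
  | .neg A => 1 - eval v A
  | .conj A B => min (eval v A) (eval v B)
  | .disj A B => max (eval v A) (eval v B)
lemma crisp (v : ℕ → ℝ) (A : Formula) :
    (eval (fun n => if 1/2 < v n then (1:ℝ) else 0) A = 0 ∨
     eval (fun n => if 1/2 < v n then (1:ℝ) else 0) A = 1) ∧
    (1/2 < eval v A → eval (fun n => if 1/2 < v n then (1:ℝ) else 0) A = 1) ∧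
    (eval v A < 1/2 → eval (fun n => if 1/2 < v n then (1:ℝ) else 0) A = 0) := by
  induction A with
  | atom n =>
    show ((if 1/2 < v n then (1:ℝ) else 0) = 0 ∨ (if 1/2 < v n then (1:ℝ) else 0) = 1) ∧ _ ∧ _
    by_cases h : 1/2 < v n
    · rw [if_pos h] at *
      exact ⟨Or.inr rfl, fun _ => if_pos h, fun h' => absurd h' (by simp [eval]; linarith)⟩
    · refine ⟨Or.inl (if_neg h), fun h' => ?_, fun _ => if_neg h⟩
      exact absurd h' (by simpa [eval] using h)
  | neg A ih =>
    obtain ⟨h01, h1, h0⟩ := ih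
    simp only [eval] at *
    refine ⟨?_, fun h => ?_, fun h => ?_⟩
    · rcases h01 with h | h <;> rw [h] <;> norm_num
    · rw [h0 (by linarith)]; norm_num
    · rw [h1 (by linarith)]; norm_num
  | conj A B ihA ihB =>
    obtain ⟨hA01, hA1, hA0⟩ := ihA
    obtain ⟨hB01, hB1, hB0⟩ := ihB
    simp only [eval] at *
    refine ⟨?_, fun h => ?_, fun h => ?_⟩
    · rcases hA01 with h | h <;> rcases hB01 with h' | h' <;> rw [h, h'] <;> norm_num
    · rw [lt_min_iff] at h; rw [hA1 h.1, hB1 h.2]; norm_num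
    · rw [min_lt_iff] at h
      rcases h with h | h
      · rw [hA0 h]; rcases hB01 with h' | h' <;> rw [h'] <;> norm_num
      · rw [hB0 h]; rcases hA01 with h' | h' <;> rw [h'] <;> norm_num
  | disj A B ihA ihB =>
    obtain ⟨hA01, hA1, hA0⟩ := ihA
    obtain ⟨hB01, hB1, hB0⟩ := ihB
    simp only [eval] at *
    refine ⟨?_, fun h => ?_, fun h => ?_⟩
    · rcases hA01 with h | h <;> rcases hB01 with h' | h' <;> rw [h, h'] <;> norm_num
    · rw [lt_max_iff] at h
      rcases h with h | h
      · rw [hA1 h]; rcases hB01 with h' | h' <;> rw [h'] <;> norm_num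
      · rw [hB1 h]; rcases hA01 with h' | h' <;> rw [h'] <;> norm_num
    · rw [max_lt_iff] at h; rw [hA0 h.1, hB0 h.2]; norm_num

theorem stmt5 (V T F : Set ℝ)
    (hV01 : ({0, 1} : Set ℝ) ⊆ V) (hVsub : V ⊆ Set.Icc 0 1)
    (hmin : ∀ x ∈ V, ∀ y ∈ V, min x y ∈ V)
    (hmax : ∀ x ∈ V, ∀ y ∈ V, max x y ∈ V)
    (hneg : ∀ x ∈ V, 1 - x ∈ V)
    (hT1 : (1:ℝ) ∈ T) (hTsub : T ⊆ Set.Ioc (1/2) 1)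
    (hTup : ∀ x ∈ T, ∀ y : ℝ, x < y → y ≤ 1 → y ∈ T)
    (hF0 : (0:ℝ) ∈ F) (hFsub : F ⊆ Set.Ico 0 (1/2))
    (hFdn : ∀ x ∈ F, ∀ y : ℝ, 0 ≤ y → y < x → y ∈ F)
    (Γ Δ : Finset Formula) :
    (¬ ∃ v : ℕ → ℝ, (∀ n, v n ∈ V) ∧
        (∀ γ ∈ Γ, eval v γ ∈ T) ∧ (∀ δ ∈ Δ, eval v δ ∈ F)) ↔
    (¬ ∃ v : ℕ → ℝ, (∀ n, v n ∈ ({0, 1} : Set ℝ)) ∧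
        (∀ γ ∈ Γ, eval v γ = 1) ∧ (∀ δ ∈ Δ, eval v δ = 0)) := by
  apply not_iff_not.mpr
  constructor
  · rintro ⟨v, hv, hΓ, hΔ⟩
    refine ⟨fun n => if 1/2 < v n then (1:ℝ) else 0, ?_, ?_, ?_⟩
    · intro n
      show (if 1/2 < v n then (1:ℝ) else 0) ∈ ({0, 1} : Set ℝ)
      by_cases h : 1/2 < v n
      · rw [if_pos h]; exact Or.inr rfl
      · rw [if_neg h]; exact Or.inl rfl
    · intro γ hγ
      exact (crisp v γ).2.1 (hTsub (hΓ γ hγ)).1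
    · intro δ hδ
      exact (crisp v δ).2.2 (hFsub (hΔ δ hδ)).2
  · rintro ⟨v, hv, hΓ, hΔ⟩
    exact ⟨v, fun n => hV01 (hv n),
      fun γ hγ => (hΓ γ hγ) ▸ hT1, fun δ hδ => (hΔ δ hδ) ▸ hF0⟩
end

section
/- Smith-consequence equals classical consequence (propositional case): Γ ⊨_S Δ (no valuation with I(γ) > 1/2 for all premises γ ∈ Γ and I(δ) < 1/2 for all conclusions δ ∈ Δ) holds if and only if Γ ⊨_C Δ (no {0,1}-valued valuation making all premises 1 and all conclusions 0). -/
/-!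
Rounding every atom to `1` if its value exceeds `1/2` and to `0` otherwise turns a Smith
countermodel into a classical one. The induction on formulas cannot track the rounded value of
every formula, since a subformula of value exactly `1/2` may round either way; it tracks only that
values above `1/2` round to `1` and values below `1/2` round to `0`, a relation preserved by
`1 - ·`, `min` and `max`. Conversely, a classical countermodel is already a Smith countermodel.
-/

lemma eval_mem_Icc {v : ℕ → ℝ} (hv : ∀ n, v n ∈ Set.Icc (0 : ℝ) 1) (A : Formula) :
    eval v A ∈ Set.Icc (0 : ℝ) 1 := by
  induction A with
  | atom n => exact hv n
  | neg A ih => simp only [eval, Set.mem_Icc] at ih ⊢; constructor <;> linarith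
  | conj A B ihA ihB => exact ⟨le_min ihA.1 ihB.1, min_le_of_left_le ihA.2⟩
  | disj A B ihA ihB => exact ⟨le_max_of_le_left ihA.1, max_le ihA.2 ihB.2⟩

def RoundsTo (x y : ℝ) : Prop := (1 / 2 < x → y = 1) ∧ (x < 1 / 2 → y = 0)

namespace RoundsTo

lemma ite (x : ℝ) : RoundsTo x (if 1 / 2 < x then 1 else 0) :=
  ⟨fun h => if_pos h, fun h => if_neg h.not_gt⟩

variable {x x' y y' : ℝ}

lemma one_sub (h : RoundsTo x y) : RoundsTo (1 - x) (1 - y) :=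
  ⟨fun hx => by rw [h.2 (by linarith)]; norm_num, fun hx => by rw [h.1 (by linarith)]; norm_num⟩

lemma min (h : RoundsTo x y) (h' : RoundsTo x' y') (hy : 0 ≤ y) (hy' : 0 ≤ y') :
    RoundsTo (min x x') (min y y') := by
  refine ⟨fun hx => ?_, fun hx => ?_⟩
  · rw [lt_min_iff] at hx
    rw [h.1 hx.1, h'.1 hx.2, min_self]
  · rcases min_lt_iff.1 hx with hx | hx
    · rw [h.2 hx, min_eq_left hy']
    · rw [h'.2 hx, min_eq_right hy]

lemma max (h : RoundsTo x y) (h' : RoundsTo x' y') (hy : y ≤ 1) (hy' : y' ≤ 1) :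
    RoundsTo (max x x') (max y y') := by
  refine ⟨fun hx => ?_, fun hx => ?_⟩
  · rcases lt_max_iff.1 hx with hx | hx
    · rw [h.1 hx, max_eq_left hy']
    · rw [h'.1 hx, max_eq_right hy]
  · rw [max_lt_iff] at hx
    rw [h.2 hx.1, h'.2 hx.2, max_self]

end RoundsTo

lemma roundsTo_eval_round (v : ℕ → ℝ) (A : Formula) :
    RoundsTo (eval v A) (eval (fun n => if 1 / 2 < v n then 1 else 0) A) := by
  have hw : ∀ n, (if 1 / 2 < v n then 1 else 0 : ℝ) ∈ Set.Icc (0 : ℝ) 1 := fun n => by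
    split_ifs <;> norm_num
  induction A with
  | atom n => exact RoundsTo.ite (v n)
  | neg A ih => exact ih.one_sub
  | conj A B ihA ihB => exact ihA.min ihB (eval_mem_Icc hw A).1 (eval_mem_Icc hw B).1
  | disj A B ihA ihB => exact ihA.max ihB (eval_mem_Icc hw A).2 (eval_mem_Icc hw B).2

theorem stmt6 (Γ Δ : Finset Formula) :
    (¬ ∃ v : ℕ → ℝ, (∀ n, v n ∈ Set.Icc (0:ℝ) 1) ∧
        (∀ γ ∈ Γ, 1/2 < eval v γ) ∧ (∀ δ ∈ Δ, eval v δ < 1/2)) ↔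
    (¬ ∃ v : ℕ → ℝ, (∀ n, v n ∈ ({0, 1} : Set ℝ)) ∧
        (∀ γ ∈ Γ, eval v γ = 1) ∧ (∀ δ ∈ Δ, eval v δ = 0)) := by
  rw [not_iff_not]
  constructor
  · rintro ⟨v, -, hΓ, hΔ⟩
    refine ⟨fun n => if 1 / 2 < v n then 1 else 0, fun n => ?_,
      fun γ hγ => (roundsTo_eval_round v γ).1 (hΓ γ hγ),
      fun δ hδ => (roundsTo_eval_round v δ).2 (hΔ δ hδ)⟩
    dsimp only
    split_ifs <;> simp
  · rintro ⟨v, hv, hΓ, hΔ⟩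
    refine ⟨v, fun n => ?_, fun γ hγ => ?_, fun δ hδ => ?_⟩
    · rcases hv n with h | h <;> rw [Set.mem_singleton_iff.mp h] <;> norm_num
    · rw [hΓ γ hγ]; norm_num
    · rw [hΔ δ hδ]; norm_num
end

section
/- ST-consequence equals classical consequence (propositional case): Γ ⊨_ST Δ (no valuation with atoms valued in {0, 1/2, 1} making every premise 1 and every conclusion 0) holds if and only if Γ ⊨_C Δ (no {0,1}-valued valuation making every premise 1 and every conclusion 0). -/
lemma eval_mem3 (v : ℕ → ℝ) (hv : ∀ n, v n = 0 ∨ v n = 1/2 ∨ v n = 1) :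
    ∀ A, eval v A = 0 ∨ eval v A = 1/2 ∨ eval v A = 1 := by
  intro A
  induction A with
  | atom n => exact hv n
  | neg A ih =>
      rcases ih with h | h | h <;> simp [eval, h] <;> norm_num
  | conj A B ihA ihB =>
      rcases ihA with h | h | h <;> rcases ihB with h' | h' | h' <;>
        simp [eval, h, h', min_def] <;> norm_num
  | disj A B ihA ihB =>
      rcases ihA with h | h | h <;> rcases ihB with h' | h' | h' <;>
        simp [eval, h, h', max_def] <;> norm_num

lemma round_lemma (v : ℕ → ℝ) (hv : ∀ n, v n = 0 ∨ v n = 1/2 ∨ v n = 1) :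
    ∀ A, (eval v A = 1 → eval (fun n => if v n = 1 then (1:ℝ) else 0) A = 1) ∧
         (eval v A = 0 → eval (fun n => if v n = 1 then (1:ℝ) else 0) A = 0) := by
  set w : ℕ → ℝ := fun n => if v n = 1 then (1:ℝ) else 0 with hwdef
  have hw2 : ∀ n, w n = 0 ∨ w n = 1/2 ∨ w n = 1 := by
    intro n; by_cases h : v n = 1 <;> simp [hwdef, h]
  intro A
  induction A with
  | atom n =>
      constructor
      · intro h
        simp only [eval] at h
        simp [eval, hwdef, h]
      · intro h
        simp only [eval] at h
        have : v n ≠ 1 := by rw [h]; norm_num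
        simp [eval, hwdef, this]
  | neg A ih =>
      constructor
      · intro h
        have : eval v A = 0 := by simp [eval] at h; linarith
        have := ih.2 this; simp [eval, this]
      · intro h
        have : eval v A = 1 := by simp [eval] at h; linarith
        have := ih.1 this; simp [eval, this]
  | conj A B ihA ihB =>
      have hA := eval_mem3 v hv A
      have hB := eval_mem3 v hv B
      have hwA := eval_mem3 w hw2 A
      have hwB := eval_mem3 w hw2 B
      constructor
      · intro h
        simp only [eval] at h ⊢
        rcases hA with h1 | h1 | h1 <;> rcases hB with h2 | h2 | h2 <;>
          rw [h1, h2] at h <;> simp [min_def] at h ⊢ <;> try norm_num at h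
        rw [ihA.1 h1, ihB.1 h2]; simp
      · intro h
        simp only [eval] at h ⊢
        rcases min_choice (eval v A) (eval v B) with hc | hc <;> rw [hc] at h
        · rw [ihA.2 h]
          rcases hwB with h2 | h2 | h2 <;> rw [h2] <;> simp [min_def] <;> norm_num
        · rw [ihB.2 h]
          rcases hwA with h2 | h2 | h2 <;> rw [h2] <;> simp [min_def] <;> norm_num
  | disj A B ihA ihB =>
      have hA := eval_mem3 v hv A
      have hB := eval_mem3 v hv B
      have hwA := eval_mem3 w hw2 A
      have hwB := eval_mem3 w hw2 B
      constructor
      · intro h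
        simp only [eval] at h ⊢
        rcases max_choice (eval v A) (eval v B) with hc | hc <;> rw [hc] at h
        · rw [ihA.1 h]
          rcases hwB with h2 | h2 | h2 <;> rw [h2] <;> simp [max_def] <;> norm_num
        · rw [ihB.1 h]
          rcases hwA with h2 | h2 | h2 <;> rw [h2] <;> simp [max_def] <;> norm_num
      · intro h
        simp only [eval] at h ⊢
        rcases hA with h1 | h1 | h1 <;> rcases hB with h2 | h2 | h2 <;>
          rw [h1, h2] at h <;> simp [max_def] at h ⊢ <;> try norm_num at h
        rw [ihA.2 h1, ihB.2 h2]; simp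

theorem stmt7 (Γ Δ : Finset Formula) :
    (¬ ∃ v : ℕ → ℝ, (∀ n, v n ∈ ({0, 1/2, 1} : Set ℝ)) ∧
        (∀ γ ∈ Γ, eval v γ = 1) ∧ (∀ δ ∈ Δ, eval v δ = 0)) ↔
    (¬ ∃ v : ℕ → ℝ, (∀ n, v n ∈ ({0, 1} : Set ℝ)) ∧
        (∀ γ ∈ Γ, eval v γ = 1) ∧ (∀ δ ∈ Δ, eval v δ = 0)) := by
  constructor
  · intro h ⟨v, hv, h1, h2⟩
    exact h ⟨v, fun n => by rcases hv n with h' | h' <;> simp [h'], h1, h2⟩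
  · intro h ⟨v, hv, h1, h2⟩
    have hv' : ∀ n, v n = 0 ∨ v n = 1/2 ∨ v n = 1 := by
      intro n
      have := hv n
      simpa using this
    refine h ⟨fun n => if v n = 1 then 1 else 0, ?_, ?_, ?_⟩
    · intro n; by_cases hn : v n = 1 <;> simp [hn]
    · exact fun γ hγ => (round_lemma v hv' γ).1 (h1 γ hγ)
    · exact fun δ hδ => (round_lemma v hv' δ).2 (h2 δ hδ)
end

section
/- (Improper parameters validate the sorites) Let 𝒫 = (V, T, F) be an improper parameter, i.e., V ⊆ T ∪ F. Then for any terms t₁, ..., tₙ (n ≥ 1), the argument with premises {P t₁} ∪ {tᵢ ∼_P tᵢ₊₁ : 1 ≤ i < n} and conclusion P tₙ is 𝒫-tolerant valid: every 𝒫-tolerant model assigning all premises values in T assigns P tₙ a value not in F. -/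
inductive Atom (Pred Term : Type) where
  | app : Pred → Term → Atom Pred Term
  | sim : Pred → Term → Term → Atom Pred Term

def Tolerant {Pred Term : Type} (T F : Set ℝ) (M : Atom Pred Term → ℝ) : Prop :=
  ∀ (P : Pred) (t u : Term), M (.app P t) ∈ T → M (.app P u) ∈ F → M (.sim P t u) ∈ F

theorem stmt9 {Pred Term : Type} (V T F : Set ℝ)
    (hV01 : ({0, 1} : Set ℝ) ⊆ V) (hVsub : V ⊆ Set.Icc 0 1)
    (hT1 : (1:ℝ) ∈ T) (hTsub : T ⊆ Set.Ioc (1/2) 1)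
    (hTup : ∀ x ∈ T, ∀ y : ℝ, x < y → y ≤ 1 → y ∈ T)
    (hF0 : (0:ℝ) ∈ F) (hFsub : F ⊆ Set.Ico 0 (1/2))
    (hFdn : ∀ x ∈ F, ∀ y : ℝ, 0 ≤ y → y < x → y ∈ F)
    (himproper : V ⊆ T ∪ F)
    (n : ℕ) (hn : 1 ≤ n) (P : Pred) (ts : Fin n → Term)
    (M : Atom Pred Term → ℝ) (hMV : ∀ a, M a ∈ V)
    (htol : Tolerant T F M)
    (hfirst : M (.app P (ts ⟨0, by omega⟩)) ∈ T)
    (hsim : ∀ i : ℕ, ∀ h : i + 1 < n,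
      M (.sim P (ts ⟨i, by omega⟩) (ts ⟨i + 1, h⟩)) ∈ T) :
    M (.app P (ts ⟨n - 1, by omega⟩)) ∉ F := by
  have hdisj : ∀ x : ℝ, x ∈ T → x ∈ F → False := by
    intro x hx hy
    have h1 := hTsub hx
    have h2 := hFsub hy
    simp [Set.mem_Ioc, Set.mem_Ico] at h1 h2
    linarith
  have key : ∀ i : ℕ, ∀ h : i < n, M (.app P (ts ⟨i, h⟩)) ∈ T := by
    intro i
    induction i with
    | zero => intro h; exact hfirst
    | succ k ih =>
      intro h
      have hk : k < n := by omega
      have hkT := ih hk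
      rcases himproper (hMV (.app P (ts ⟨k+1, h⟩))) with hT | hF
      · exact hT
      · exact absurd (htol P (ts ⟨k, hk⟩) (ts ⟨k+1, h⟩) hkT hF)
          (fun hc => hdisj _ (hsim k h) hc)
  intro hF
  exact hdisj _ (key (n-1) (by omega)) hF
end

section
/- (Negation metainference under symmetry) Let 𝒫 = (V, T, F) be a symmetric parameter, meaning x ∈ T iff 1 - x ∈ F for all x ∈ [0,1]. Then 𝒫-consequence is closed under ¬L: if Γ ⊨_𝒫 {A} ∪ Δ then Γ ∪ {¬A} ⊨_𝒫 Δ; and under ¬R: if Γ ∪ {A} ⊨_𝒫 Δ then Γ ⊨_𝒫 {¬A} ∪ Δ. -/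
def Cons (V T F : Set ℝ) (Γ Δ : Set Formula) : Prop :=
  ¬ ∃ v : ℕ → ℝ, (∀ n, v n ∈ V) ∧ (∀ γ ∈ Γ, eval v γ ∈ T) ∧ (∀ δ ∈ Δ, eval v δ ∈ F)

lemma eval_mem (V : Set ℝ)
    (hmin : ∀ x ∈ V, ∀ y ∈ V, min x y ∈ V)
    (hmax : ∀ x ∈ V, ∀ y ∈ V, max x y ∈ V)
    (hneg : ∀ x ∈ V, 1 - x ∈ V)
    (v : ℕ → ℝ) (hv : ∀ n, v n ∈ V) : ∀ A, eval v A ∈ V := by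
  intro A
  induction A with
  | atom n => exact hv n
  | neg A ih => exact hneg _ ih
  | conj A B ihA ihB => exact hmin _ ihA _ ihB
  | disj A B ihA ihB => exact hmax _ ihA _ ihB

theorem stmt11 (V T F : Set ℝ)
    (hV01 : ({0, 1} : Set ℝ) ⊆ V) (hVsub : V ⊆ Set.Icc 0 1)
    (hmin : ∀ x ∈ V, ∀ y ∈ V, min x y ∈ V)
    (hmax : ∀ x ∈ V, ∀ y ∈ V, max x y ∈ V)
    (hneg : ∀ x ∈ V, 1 - x ∈ V)
    (hT1 : (1:ℝ) ∈ T) (hTsub : T ⊆ Set.Ioc (1/2) 1)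
    (hTup : ∀ x ∈ T, ∀ y : ℝ, x < y → y ≤ 1 → y ∈ T)
    (hF0 : (0:ℝ) ∈ F) (hFsub : F ⊆ Set.Ico 0 (1/2))
    (hFdn : ∀ x ∈ F, ∀ y : ℝ, 0 ≤ y → y < x → y ∈ F)
    (hsym : ∀ x ∈ Set.Icc (0:ℝ) 1, x ∈ T ↔ 1 - x ∈ F) :
    (∀ (Γ Δ : Set Formula) (A : Formula),
        Cons V T F Γ (insert A Δ) → Cons V T F (insert (Formula.neg A) Γ) Δ) ∧
    (∀ (Γ Δ : Set Formula) (A : Formula),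
        Cons V T F (insert A Γ) Δ → Cons V T F Γ (insert (Formula.neg A) Δ)) := by
  have key : ∀ (v : ℕ → ℝ), (∀ n, v n ∈ V) → ∀ A, eval v A ∈ Set.Icc (0:ℝ) 1 :=
    fun v hv A => hVsub (eval_mem V hmin hmax hneg v hv A)
  constructor
  · intro Γ Δ A h ⟨v, hv, hΓ, hΔ⟩
    have hnA : 1 - eval v A ∈ T := hΓ _ (Set.mem_insert _ _)
    have hA : eval v A ∈ F := by
      have := (hsym (1 - eval v A) (key v hv (Formula.neg A))).mp hnA
      simpa using this
    exact h ⟨v, hv, fun γ hγ => hΓ _ (Set.mem_insert_of_mem _ hγ),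
      fun δ hδ => by
        rcases Set.mem_insert_iff.mp hδ with rfl | hδ
        · exact hA
        · exact hΔ _ hδ⟩
  · intro Γ Δ A h ⟨v, hv, hΓ, hΔ⟩
    have hnA : 1 - eval v A ∈ F := hΔ _ (Set.mem_insert _ _)
    have hA : eval v A ∈ T := (hsym (eval v A) (key v hv A)).mpr hnA
    exact h ⟨v, hv, fun γ hγ => by
        rcases Set.mem_insert_iff.mp hγ with rfl | hγ
        · exact hA
        · exact hΓ _ hγ,
      fun δ hδ => hΔ _ (Set.mem_insert_of_mem _ hδ)⟩
end

section
/- (Conjunction and disjunction metainferences hold for every parameter) For any parameter 𝒫 = (V, T, F): (∧L) if Γ ∪ {A, B} ⊨_𝒫 Δ then Γ ∪ {A ∧ B} ⊨_𝒫 Δ; (∧R) if Γ ⊨_𝒫 {A} ∪ Δ and Γ ⊨_𝒫 {B} ∪ Δ then Γ ⊨_𝒫 {A ∧ B} ∪ Δ; (∨L) if Γ ∪ {A} ⊨_𝒫 Δ and Γ ∪ {B} ⊨_𝒫 Δ then Γ ∪ {A ∨ B} ⊨_𝒫 Δ; (∨R) if Γ ⊨_𝒫 {A, B} ∪ Δ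 then Γ ⊨_𝒫 {A ∨ B} ∪ Δ. -/
lemma eval_mem_V (V : Set ℝ)
    (hmin : ∀ x ∈ V, ∀ y ∈ V, min x y ∈ V)
    (hmax : ∀ x ∈ V, ∀ y ∈ V, max x y ∈ V)
    (hneg : ∀ x ∈ V, 1 - x ∈ V)
    (v : ℕ → ℝ) (hv : ∀ n, v n ∈ V) : ∀ φ : Formula, eval v φ ∈ V := by
  intro φ
  induction φ with
  | atom n => exact hv n
  | neg A ih => exact hneg _ ih
  | conj A B ihA ihB => exact hmin _ ihA _ ihB
  | disj A B ihA ihB => exact hmax _ ihA _ ihB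

theorem stmt12 (V T F : Set ℝ)
    (hV01 : ({0, 1} : Set ℝ) ⊆ V) (hVsub : V ⊆ Set.Icc 0 1)
    (hmin : ∀ x ∈ V, ∀ y ∈ V, min x y ∈ V)
    (hmax : ∀ x ∈ V, ∀ y ∈ V, max x y ∈ V)
    (hneg : ∀ x ∈ V, 1 - x ∈ V)
    (hT1 : (1:ℝ) ∈ T) (hTsub : T ⊆ Set.Ioc (1/2) 1)
    (hTup : ∀ x ∈ T, ∀ y : ℝ, x < y → y ≤ 1 → y ∈ T)
    (hF0 : (0:ℝ) ∈ F) (hFsub : F ⊆ Set.Ico 0 (1/2))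
    (hFdn : ∀ x ∈ F, ∀ y : ℝ, 0 ≤ y → y < x → y ∈ F)
    (Γ Δ : Set Formula) (A B : Formula) :
    (Cons V T F (insert A (insert B Γ)) Δ → Cons V T F (insert (Formula.conj A B) Γ) Δ) ∧
    (Cons V T F Γ (insert A Δ) → Cons V T F Γ (insert B Δ) →
      Cons V T F Γ (insert (Formula.conj A B) Δ)) ∧
    (Cons V T F (insert A Γ) Δ → Cons V T F (insert B Γ) Δ →
      Cons V T F (insert (Formula.disj A B) Γ) Δ) ∧
    (Cons V T F Γ (insert A (insert B Δ)) → Cons V T F Γ (insert (Formula.disj A B) Δ)) := by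
  have hbound : ∀ (v : ℕ → ℝ), (∀ n, v n ∈ V) → ∀ φ, eval v φ ∈ Set.Icc (0:ℝ) 1 := by
    intro v hv φ
    exact hVsub (eval_mem_V V hmin hmax hneg v hv φ)
  have hTle : ∀ (v : ℕ → ℝ), (∀ n, v n ∈ V) → ∀ x ∈ T, ∀ φ, x ≤ eval v φ → eval v φ ∈ T := by
    intro v hv x hx φ hle
    rcases lt_or_eq_of_le hle with h | h
    · exact hTup x hx _ h (hbound v hv φ).2
    · exact h ▸ hx
  have hFle : ∀ (v : ℕ → ℝ), (∀ n, v n ∈ V) → ∀ x ∈ F, ∀ φ, eval v φ ≤ x → eval v φ ∈ F := by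
    intro v hv x hx φ hle
    rcases lt_or_eq_of_le hle with h | h
    · exact hFdn x hx _ (hbound v hv φ).1 h
    · exact h ▸ hx
  refine ⟨?_, ?_, ?_, ?_⟩
  · -- ∧L
    intro h ⟨v, hv, hΓ, hΔ⟩
    have hc : eval v (Formula.conj A B) ∈ T := hΓ _ (Set.mem_insert _ _)
    refine h ⟨v, hv, ?_, hΔ⟩
    intro γ hγ
    rcases hγ with rfl | hγ
    · exact hTle v hv _ hc γ (min_le_left _ _)
    rcases hγ with rfl | hγ
    · exact hTle v hv _ hc γ (min_le_right _ _)
    · exact hΓ γ (Set.mem_insert_of_mem _ hγ)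
  · -- ∧R
    intro h1 h2 ⟨v, hv, hΓ, hΔ⟩
    have hc : eval v (Formula.conj A B) ∈ F := hΔ _ (Set.mem_insert _ _)
    rcases min_cases (eval v A) (eval v B) with ⟨he, _⟩ | ⟨he, _⟩
    · refine h1 ⟨v, hv, hΓ, ?_⟩
      intro δ hδ
      rcases hδ with rfl | hδ
      · exact he ▸ hc
      · exact hΔ δ (Set.mem_insert_of_mem _ hδ)
    · refine h2 ⟨v, hv, hΓ, ?_⟩
      intro δ hδ
      rcases hδ with rfl | hδ
      · exact he ▸ hc
      · exact hΔ δ (Set.mem_insert_of_mem _ hδ)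
  · -- ∨L
    intro h1 h2 ⟨v, hv, hΓ, hΔ⟩
    have hc : eval v (Formula.disj A B) ∈ T := hΓ _ (Set.mem_insert _ _)
    rcases max_cases (eval v A) (eval v B) with ⟨he, _⟩ | ⟨he, _⟩
    · refine h1 ⟨v, hv, ?_, hΔ⟩
      intro γ hγ
      rcases hγ with rfl | hγ
      · exact he ▸ hc
      · exact hΓ γ (Set.mem_insert_of_mem _ hγ)
    · refine h2 ⟨v, hv, ?_, hΔ⟩
      intro γ hγ
      rcases hγ with rfl | hγ
      · exact he ▸ hc
      · exact hΓ γ (Set.mem_insert_of_mem _ hγ)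
  · -- ∨R
    intro h ⟨v, hv, hΓ, hΔ⟩
    have hc : eval v (Formula.disj A B) ∈ F := hΔ _ (Set.mem_insert _ _)
    refine h ⟨v, hv, hΓ, ?_⟩
    intro δ hδ
    rcases hδ with rfl | hδ
    · exact hFle v hv _ hc δ (le_max_left _ _)
    rcases hδ with rfl | hδ
    · exact hFle v hv _ hc δ (le_max_right _ _)
    · exact hΔ δ (Set.mem_insert_of_mem _ hδ)
end

section
/- (Material conditional metainferences under symmetry) Let 𝒫 = (V, T, F) be a symmetric parameter, and define A → B as an abbreviation whose value is max(1 - I(A), I(B)). Then 𝒫-consequence is closed under →R: if Γ ∪ {A} ⊨_𝒫 {B} ∪ Δ then Γ ⊨_𝒫 {A → B} ∪ Δ; and under →L: if Γ ⊨_𝒫 {A} ∪ Δ and Γ ∪ {B} ⊨_𝒫 Δ then Γ ∪ {A → B} ⊨_𝒫 Δ. -/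
def Formula.imp (A B : Formula) : Formula := Formula.disj (Formula.neg A) B

lemma eval_mem_aux (V : Set ℝ)
    (hmin : ∀ x ∈ V, ∀ y ∈ V, min x y ∈ V)
    (hmax : ∀ x ∈ V, ∀ y ∈ V, max x y ∈ V)
    (hneg : ∀ x ∈ V, 1 - x ∈ V)
    (v : ℕ → ℝ) (hv : ∀ n, v n ∈ V) : ∀ A : Formula, eval v A ∈ V := by
  intro A
  induction A with
  | atom n => exact hv n
  | neg A ih => exact hneg _ ih
  | conj A B ihA ihB => exact hmin _ ihA _ ihB
  | disj A B ihA ihB => exact hmax _ ihA _ ihB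

theorem stmt18 (V T F : Set ℝ)
    (hV01 : ({0, 1} : Set ℝ) ⊆ V) (hVsub : V ⊆ Set.Icc 0 1)
    (hmin : ∀ x ∈ V, ∀ y ∈ V, min x y ∈ V)
    (hmax : ∀ x ∈ V, ∀ y ∈ V, max x y ∈ V)
    (hneg : ∀ x ∈ V, 1 - x ∈ V)
    (hT1 : (1:ℝ) ∈ T) (hTsub : T ⊆ Set.Ioc (1/2) 1)
    (hTup : ∀ x ∈ T, ∀ y : ℝ, x < y → y ≤ 1 → y ∈ T)
    (hF0 : (0:ℝ) ∈ F) (hFsub : F ⊆ Set.Ico 0 (1/2))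
    (hFdn : ∀ x ∈ F, ∀ y : ℝ, 0 ≤ y → y < x → y ∈ F)
    (hsym : ∀ x ∈ Set.Icc (0:ℝ) 1, x ∈ T ↔ 1 - x ∈ F) :
    (∀ (Γ Δ : Set Formula) (A B : Formula),
        Cons V T F (insert A Γ) (insert B Δ) →
        Cons V T F Γ (insert (Formula.imp A B) Δ)) ∧
    (∀ (Γ Δ : Set Formula) (A B : Formula),
        Cons V T F Γ (insert A Δ) → Cons V T F (insert B Γ) Δ →
        Cons V T F (insert (Formula.imp A B) Γ) Δ) := by
  have hFle : ∀ x ∈ F, ∀ y : ℝ, 0 ≤ y → y ≤ x → y ∈ F := by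
    intro x hx y hy0 hyx
    rcases lt_or_eq_of_le hyx with h | h
    · exact hFdn x hx y hy0 h
    · exact h ▸ hx
  constructor
  · intro Γ Δ A B h ⟨v, hv, hΓ, hΔ⟩
    have hA01 := hVsub (eval_mem_aux V hmin hmax hneg v hv A)
    have hB01 := hVsub (eval_mem_aux V hmin hmax hneg v hv B)
    have himp : max (1 - eval v A) (eval v B) ∈ F :=
      hΔ _ (Set.mem_insert _ _)
    have hnA : 1 - eval v A ∈ F :=
      hFle _ himp _ (by linarith [hA01.2]) (le_max_left _ _)
    have hBf : eval v B ∈ F := hFle _ himp _ hB01.1 (le_max_right _ _)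
    have hAT : eval v A ∈ T := (hsym _ hA01).mpr hnA
    exact h ⟨v, hv, fun γ hγ => by
      rcases hγ with h' | h'
      · exact h' ▸ hAT
      · exact hΓ γ h', fun δ hδ => by
      rcases hδ with h' | h'
      · exact h' ▸ hBf
      · exact hΔ δ (Set.mem_insert_of_mem _ h')⟩
  · intro Γ Δ A B h1 h2 ⟨v, hv, hΓ, hΔ⟩
    have hA01 := hVsub (eval_mem_aux V hmin hmax hneg v hv A)
    have himp : max (1 - eval v A) (eval v B) ∈ T :=
      hΓ _ (Set.mem_insert _ _)
    have hΓ' : ∀ γ ∈ Γ, eval v γ ∈ T := fun γ hγ => hΓ γ (Set.mem_insert_of_mem _ hγ)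
    rcases max_cases (1 - eval v A) (eval v B) with ⟨heq, _⟩ | ⟨heq, _⟩
    · have hnA : 1 - eval v A ∈ T := heq ▸ himp
      have hAF : eval v A ∈ F := by
        have := (hsym (1 - eval v A) ⟨by linarith [hA01.2], by linarith [hA01.1]⟩).mp hnA
        simpa using this
      exact h1 ⟨v, hv, hΓ', fun δ hδ => by
        rcases hδ with h' | h'
        · exact h' ▸ hAF
        · exact hΔ δ h'⟩
    · have hBT : eval v B ∈ T := heq ▸ himp
      exact h2 ⟨v, hv, fun γ hγ => by
        rcases hγ with h' | h'
        · exact h' ▸ hBT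
        · exact hΓ' γ h', hΔ⟩
end

section
/- (Instance of tolerance as quantified fact, three-valued) In any strong Kleene model where for all terms t, u the ST restriction holds (value of Pt is 1 and value of Pu is 0 implies value of t ∼_P u is 0), the sentence ∀x ∀y ((Px ∧ x ∼_P y) → Py) never takes value 0, where → is the material conditional (max(1-a, b)), ∧ is min, and ∀ is infimum over the domain. Hence tolerance is ST-valid: it cannot be a conclusion in any ST-tolerant countermodel. -/
theorem stmt19 (D : Type) [Nonempty D] (P : D → ℝ) (S : D → D → ℝ)
    (hP : ∀ d, P d ∈ ({0, 1/2, 1} : Set ℝ))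
    (hS : ∀ d e, S d e ∈ ({0, 1/2, 1} : Set ℝ))
    (hrefl : ∀ d, S d d = 1) (hsym : ∀ d e, S d e = S e d)
    (hst : ∀ d e, P d = 1 → P e = 0 → S d e = 0) :
    (∀ d e, 1/2 ≤ max (1 - min (P d) (S d e)) (P e)) ∧
    1/2 ≤ sInf {v : ℝ | ∃ d e, v = max (1 - min (P d) (S d e)) (P e)} ∧
    sInf {v : ℝ | ∃ d e, v = max (1 - min (P d) (S d e)) (P e)} ≠ 0 := by
  have key : ∀ d e, 1/2 ≤ max (1 - min (P d) (S d e)) (P e) := by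
    intro d e
    rcases hP e with he | he | he
    · rcases hP d with hd | hd | hd
      · refine le_max_of_le_left ?_
        have : min (P d) (S d e) ≤ 0 := by rw [hd]; exact min_le_left _ _
        linarith
      · refine le_max_of_le_left ?_
        have : min (P d) (S d e) ≤ 1/2 := by rw [hd]; exact min_le_left _ _
        linarith
      · have hs := hst d e hd he
        refine le_max_of_le_left ?_
        have : min (P d) (S d e) ≤ 0 := by rw [hs]; exact min_le_right _ _
        linarith
    · exact le_max_of_le_right (by rw [he])
    · exact le_max_of_le_right (by rw [he]; norm_num)
  have hne : {v : ℝ | ∃ d e, v = max (1 - min (P d) (S d e)) (P e)}.Nonempty := by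
    obtain ⟨d⟩ := ‹Nonempty D›
    exact ⟨_, d, d, rfl⟩
  have hinf : 1/2 ≤ sInf {v : ℝ | ∃ d e, v = max (1 - min (P d) (S d e)) (P e)} := by
    apply le_csInf hne
    rintro v ⟨d, e, rfl⟩
    exact key d e
  exact ⟨key, hinf, by intro h; rw [h] at hinf; linarith⟩
end
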